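/- arXiv:1806.11132 — 5 statements merged into one kernel-verified Lean document; each statement's English description precedes it below -/
import Mathlib

section
/- If G is a nontrivial finite group, then ω(G) = 2 if and only if G is an elementary abelian p-group for some prime p. -/
/-!
Since automorphisms fix `1`, `ω(G) = 2` says exactly that `Aut(G)` is transitive on the
nontrivial elements. Then all nontrivial elements have the same prime order `p`, so `G` is
a `p`-group; its centre is nontrivial and characteristic, hence contains every nontrivial
element. Conversely, an elementary abelian `p`-group is a vector space over `ZMod p`, and
`GL` of any vector space is transitive on nonzero vectors.
-/

/-- The number of automorphism orbits of a group `G`: the number of orbits of the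
natural action of `Aut(G)` on `G`. -/
noncomputable def omegaOrbits (G : Type*) [Group G] : ℕ :=
  Nat.card (Quotient (MulAction.orbitRel (MulAut G) G))

/-- `G` is an FC-group: every element has a finite conjugacy class. -/
def IsFCGroup (G : Type*) [Group G] : Prop :=
  ∀ g : G, {h : G | IsConj g h}.Finite

/-- `G` has finitely many automorphism orbits. -/
def HasFinitelyManyAutOrbits (G : Type*) [Group G] : Prop :=
  Finite (Quotient (MulAction.orbitRel (MulAut G) G))

open MulAction

theorem MulAut.orbit_one (G : Type*) [Group G] : orbit (MulAut G) (1 : G) = {1} := by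
  ext g
  simp [mem_orbit_iff, eq_comm]

theorem card_quotient_orbitRel_mulAut_eq_two_iff (G : Type*) [Group G] [Nontrivial G] :
    Nat.card (Quotient (orbitRel (MulAut G) G)) = 2 ↔
      ∀ g h : G, g ≠ 1 → h ≠ 1 → ∃ φ : MulAut G, φ g = h := by
  have mk_ne_mk_one {g : G} (hg : g ≠ 1) :
      (Quotient.mk'' g : Quotient (orbitRel (MulAut G) G)) ≠ Quotient.mk'' 1 := by
    rwa [Ne, Quotient.eq'', orbitRel_apply, MulAut.orbit_one]
  rw [Nat.card_eq_two_iff' (Quotient.mk'' (1 : G))]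
  constructor
  · rintro ⟨o, -, ho⟩ g h hg hh
    have hgh : (Quotient.mk'' h : Quotient (orbitRel (MulAut G) G)) = Quotient.mk'' g := by
      rw [ho _ (mk_ne_mk_one hg), ho _ (mk_ne_mk_one hh)]
    exact Quotient.eq''.mp hgh
  · intro htrans
    obtain ⟨g, hg⟩ := exists_ne (1 : G)
    refine ⟨Quotient.mk'' g, mk_ne_mk_one hg, Quotient.ind fun h hh => ?_⟩
    have hh : h ≠ 1 := by rintro rfl; exact hh rfl
    exact Quotient.sound (htrans g h hg hh)

theorem exists_prime_forall_pow_eq_one_of_mulAut_transitive {G : Type*} [Group G] [Finite G]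
    [Nontrivial G] (htrans : ∀ g h : G, g ≠ 1 → h ≠ 1 → ∃ φ : MulAut G, φ g = h) :
    ∃ p : ℕ, p.Prime ∧ ∀ g : G, g ^ p = 1 := by
  obtain ⟨p, hp, hdvd⟩ := Nat.exists_prime_and_dvd (Finite.one_lt_card (α := G)).ne'
  have := Fact.mk hp
  obtain ⟨g₀, hg₀⟩ := exists_prime_orderOf_dvd_card' p hdvd
  have hg₀_ne : g₀ ≠ 1 := by
    rintro rfl
    exact hp.one_lt.ne' (hg₀.symm.trans orderOf_one)
  refine ⟨p, hp, fun g => ?_⟩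
  rcases eq_or_ne g 1 with rfl | hg
  · exact one_pow p
  · obtain ⟨φ, rfl⟩ := htrans g₀ g hg₀_ne hg
    rw [← map_pow, ← hg₀, pow_orderOf_eq_one, map_one]

theorem mul_comm_of_mulAut_transitive {G : Type*} [Group G] [Nontrivial (Subgroup.center G)]
    (htrans : ∀ g h : G, g ≠ 1 → h ≠ 1 → ∃ φ : MulAut G, φ g = h) (a b : G) :
    a * b = b * a := by
  obtain ⟨⟨z, hz⟩, hz_ne⟩ := exists_ne (1 : Subgroup.center G)
  have hz_ne : z ≠ 1 := fun h => hz_ne (Subtype.ext h)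
  rcases eq_or_ne a 1 with rfl | ha
  · rw [one_mul, mul_one]
  · obtain ⟨φ, rfl⟩ := htrans z a hz_ne ha
    exact (Subgroup.mem_center_iff.mp (MulEquivClass.apply_mem_center φ hz) b).symm

theorem exists_linearEquiv_apply_eq (K : Type*) {V : Type*} [DivisionRing K] [AddCommGroup V]
    [Module K V] {x y : V} (hx : x ≠ 0) (hy : y ≠ 0) : ∃ e : V ≃ₗ[K] V, e x = y := by
  let f := (LinearEquiv.toSpanNonzeroSingleton K V x hx).symm ≪≫ₗ
    LinearEquiv.toSpanNonzeroSingleton K V y hy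
  obtain ⟨e, he⟩ := Submodule.exists_linearEquiv_restrict_eq f
  refine ⟨e, ?_⟩
  rw [← he ⟨x, Submodule.mem_span_singleton_self x⟩]
  simp [f, LinearEquiv.coord_self]

theorem exists_mulAut_apply_eq_of_pow_prime_eq_one {G : Type*} [CommGroup G] {p : ℕ}
    [Fact p.Prime] (hexp : ∀ g : G, g ^ p = 1) {g h : G} (hg : g ≠ 1) (hh : h ≠ 1) :
    ∃ φ : MulAut G, φ g = h := by
  let : Module (ZMod p) (Additive G) := AddCommGroup.zmodModule fun x => hexp x.toMul
  obtain ⟨e, he⟩ := exists_linearEquiv_apply_eq (ZMod p) (x := Additive.ofMul g)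
    (y := Additive.ofMul h) hg hh
  exact ⟨MulEquiv.toAdditive.symm e.toAddEquiv, he⟩

theorem stmt1 (G : Type*) [Group G] [Finite G] [Nontrivial G] :
    omegaOrbits G = 2 ↔
      ∃ p : ℕ, p.Prime ∧ (∀ a b : G, a * b = b * a) ∧ ∀ g : G, g ^ p = 1 := by
  rw [omegaOrbits, card_quotient_orbitRel_mulAut_eq_two_iff]
  constructor
  · intro htrans
    obtain ⟨p, hp, hexp⟩ := exists_prime_forall_pow_eq_one_of_mulAut_transitive htrans
    have := Fact.mk hp
    have : Nontrivial (Subgroup.center G) :=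
      IsPGroup.center_nontrivial fun g => ⟨1, by rw [pow_one, hexp]⟩
    exact ⟨p, hp, mul_comm_of_mulAut_transitive htrans, hexp⟩
  · rintro ⟨p, hp, hcomm, hexp⟩ g h hg hh
    have := Fact.mk hp
    let : CommGroup G := { mul_comm := hcomm }
    exact exists_mulAut_apply_eq_of_pow_prime_eq_one hexp hg hh
end

section
/- Let G be a nontrivial group with finitely many automorphism orbits, and suppose M and N are nontrivial characteristic subgroups of G with M ∩ N = 1. Then ω(G) ≥ ω(M)·ω(N) ≥ 2·ω(N). -/
section Aux

variable {G : Type*} [Group G]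

lemma char_mem (M : Subgroup G) [h : M.Characteristic] (φ : MulAut G) {m : G}
    (hm : m ∈ M) : φ m ∈ M := by
  have := h.fixed φ.symm
  rw [← this]
  simpa using hm

/-- The automorphism of a characteristic subgroup induced by an automorphism of `G`. -/
def charRestrict (M : Subgroup G) [M.Characteristic] (φ : MulAut G) : MulAut M where
  toFun m := ⟨φ m, char_mem M φ m.2⟩
  invFun m := ⟨φ.symm m, char_mem M φ.symm m.2⟩
  left_inv m := by ext; simp
  right_inv m := by ext; simp
  map_mul' m₁ m₂ := by ext; simp

lemma orbit_eq_of_aut (M : Subgroup G) [M.Characteristic] (φ : MulAut G) (m : M) :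
    (Quotient.mk (MulAction.orbitRel (MulAut M) M) (charRestrict M φ m)) =
      Quotient.mk (MulAction.orbitRel (MulAut M) M) m :=
  Quotient.sound (MulAction.mem_orbit m (charRestrict M φ))

lemma decomp_unique {M N : Subgroup G} (hMN : M ⊓ N = ⊥) {m₁ m₂ n₁ n₂ : G}
    (h₁ : m₁ ∈ M) (h₂ : m₂ ∈ M) (h₃ : n₁ ∈ N) (h₄ : n₂ ∈ N)
    (h : m₁ * n₁ = m₂ * n₂) : m₁ = m₂ ∧ n₁ = n₂ := by
  have key : m₂⁻¹ * m₁ = n₂ * n₁⁻¹ := by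
    have h' : m₂⁻¹ * (m₁ * n₁) * n₁⁻¹ = m₂⁻¹ * (m₂ * n₂) * n₁⁻¹ := by rw [h]
    simpa [mul_assoc] using h'
  have hmem : m₂⁻¹ * m₁ ∈ M ⊓ N := by
    refine ⟨M.mul_mem (M.inv_mem h₂) h₁, ?_⟩
    rw [key]; exact N.mul_mem h₄ (N.inv_mem h₃)
  rw [hMN, Subgroup.mem_bot] at hmem
  have hm : m₁ = m₂ := by
    have := hmem
    rw [inv_mul_eq_one] at this
    exact this.symm
  refine ⟨hm, ?_⟩
  rw [hm] at h
  exact mul_left_cancel h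

end Aux

theorem stmt2 (G : Type*) [Group G] [Nontrivial G]
    (hfin : HasFinitelyManyAutOrbits G)
    (M N : Subgroup G) [M.Characteristic] [N.Characteristic]
    (hM : M ≠ ⊥) (hN : N ≠ ⊥) (hMN : M ⊓ N = ⊥) :
    omegaOrbits M * omegaOrbits N ≤ omegaOrbits G ∧
      2 * omegaOrbits N ≤ omegaOrbits M * omegaOrbits N := by
  classical
  set QG := Quotient (MulAction.orbitRel (MulAut G) G) with hQG
  set QM := Quotient (MulAction.orbitRel (MulAut M) M) with hQM
  set QN := Quotient (MulAction.orbitRel (MulAut N) N) with hQN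
  have hGfin : Finite QG := hfin
  -- the decomposition function
  let f : G → QM × QN := fun g =>
    if h : ∃ p : M × N, (p.1 : G) * (p.2 : G) = g then
      (Quotient.mk _ h.choose.1, Quotient.mk _ h.choose.2)
    else (Quotient.mk _ 1, Quotient.mk _ 1)
  have f_spec : ∀ (m : M) (n : N), f ((m : G) * n) = (Quotient.mk _ m, Quotient.mk _ n) := by
    intro m n
    have hex : ∃ p : M × N, (p.1 : G) * (p.2 : G) = (m : G) * n := ⟨(m, n), rfl⟩
    have hch := hex.choose_spec
    have := decomp_unique hMN hex.choose.1.2 m.2 hex.choose.2.2 n.2 hch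
    have h1 : hex.choose.1 = m := Subtype.ext this.1
    have h2 : hex.choose.2 = n := Subtype.ext this.2
    simp only [f, dif_pos hex, h1, h2]
  have f_aut : ∀ (φ : MulAut G) (g : G), f (φ g) = f g := by
    intro φ g
    by_cases h : ∃ p : M × N, (p.1 : G) * (p.2 : G) = g
    · obtain ⟨⟨m, n⟩, hp⟩ := h
      have hg : f g = (Quotient.mk _ m, Quotient.mk _ n) := by rw [← hp]; exact f_spec m n
      have hφ : φ g = ((charRestrict M φ m : M) : G) * ((charRestrict N φ n : N) : G) := by
        rw [← hp]; simp [charRestrict]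
      rw [hg, hφ, f_spec, orbit_eq_of_aut, orbit_eq_of_aut]
    · have h' : ¬ ∃ p : M × N, (p.1 : G) * (p.2 : G) = φ g := by
        rintro ⟨⟨m, n⟩, hp⟩
        exact h ⟨(charRestrict M φ.symm m, charRestrict N φ.symm n), by
          simp only [charRestrict, MulEquiv.coe_mk, Equiv.coe_fn_mk]
          rw [← map_mul φ.symm, hp]; simp⟩
      simp only [f, dif_neg h, dif_neg h']
  -- descend to the quotient
  let F : QG → QM × QN := Quotient.lift f (by
    intro a b hab
    obtain ⟨φ, hφ⟩ := MulAction.mem_orbit_iff.mp (MulAction.orbitRel_apply.mp hab)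
    rw [← hφ]
    exact f_aut φ b)
  have hFsurj : Function.Surjective F := by
    rintro ⟨qm, qn⟩
    induction qm using Quotient.ind with
    | _ m =>
    induction qn using Quotient.ind with
    | _ n =>
    exact ⟨Quotient.mk _ ((m : G) * n), f_spec m n⟩
  have hcard : Nat.card (QM × QN) ≤ Nat.card QG :=
    Nat.card_le_card_of_surjective F hFsurj
  rw [Nat.card_prod] at hcard
  have hfirst : omegaOrbits M * omegaOrbits N ≤ omegaOrbits G := hcard
  refine ⟨hfirst, ?_⟩
  -- finiteness of QM, QN
  have hprodfin : Finite (QM × QN) := Finite.of_surjective F hFsurj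
  have hNE : Nonempty QN := ⟨Quotient.mk _ 1⟩
  have hMfin : Finite QM := Finite.prod_left QN
  -- QM is nontrivial
  obtain ⟨m₀, hm₀⟩ := Subgroup.ne_bot_iff_exists_ne_one.mp hM
  have hne : (Quotient.mk (MulAction.orbitRel (MulAut M) M) m₀) ≠ Quotient.mk _ 1 := by
    intro hcontra
    obtain ⟨ψ, hψ⟩ := MulAction.mem_orbit_iff.mp
      (MulAction.orbitRel_apply.mp (Quotient.exact hcontra))
    apply hm₀
    rw [← hψ, MulAut.smul_def, map_one]
  have hnontriv : Nontrivial QM := ⟨_, _, hne⟩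
  have h2 : 2 ≤ Nat.card QM := by
    have := Fintype.ofFinite QM
    rw [Nat.card_eq_fintype_card]
    exact Fintype.one_lt_card_iff_nontrivial.mpr hnontriv
  exact Nat.mul_le_mul_right _ h2
end

section
/- If G = M × N is a direct product of groups M and N, and both M and N are characteristic subgroups of G, then ω(G) = ω(M)·ω(N). -/
section Aux

variable {M N : Type*} [Group M] [Group N]

lemma snd_eq_one (hM : ((⊤ : Subgroup M).prod (⊥ : Subgroup N)).Characteristic)
    (f : MulAut (M × N)) (m : M) : (f (m, 1)).2 = 1 := by
  have h := hM.fixed f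
  have hmem : (m, (1 : N)) ∈ ((⊤ : Subgroup M).prod (⊥ : Subgroup N)).comap
      (f : M × N ≃* M × N).toMonoidHom := by
    rw [h]; exact ⟨trivial, rfl⟩
  exact hmem.2

lemma fst_eq_one (hN : ((⊥ : Subgroup M).prod (⊤ : Subgroup N)).Characteristic)
    (f : MulAut (M × N)) (n : N) : (f (1, n)).1 = 1 := by
  have h := hN.fixed f
  have hmem : ((1 : M), n) ∈ ((⊥ : Subgroup M).prod (⊤ : Subgroup N)).comap
      (f : M × N ≃* M × N).toMonoidHom := by
    rw [h]; exact ⟨rfl, trivial⟩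
  exact hmem.1

/-- The restriction of an automorphism of `M × N` to `M`, given that `M × 1` is characteristic. -/
def restrictFst (hM : ((⊤ : Subgroup M).prod (⊥ : Subgroup N)).Characteristic)
    (f : MulAut (M × N)) : MulAut M where
  toFun m := (f (m, 1)).1
  invFun m := (f.symm (m, 1)).1
  left_inv m := by
    have h1 : ((f (m, 1)).1, (1 : N)) = f (m, 1) :=
      Prod.ext rfl (snd_eq_one hM f m).symm
    show (f.symm ((f (m, 1)).1, (1 : N))).1 = m
    rw [h1]; simp
  right_inv m := by
    have h1 : ((f.symm (m, 1)).1, (1 : N)) = f.symm (m, 1) :=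
      Prod.ext rfl (snd_eq_one hM f.symm m).symm
    show (f ((f.symm (m, 1)).1, (1 : N))).1 = m
    rw [h1]; simp
  map_mul' a b := by
    show (f (a * b, 1)).1 = (f (a, 1)).1 * (f (b, 1)).1
    have : ((a * b : M), (1 : N)) = (a, (1 : N)) * (b, 1) := by simp
    rw [this, map_mul]
    rfl

/-- The restriction of an automorphism of `M × N` to `N`, given that `1 × N` is characteristic. -/
def restrictSnd (hN : ((⊥ : Subgroup M).prod (⊤ : Subgroup N)).Characteristic)
    (f : MulAut (M × N)) : MulAut N where
  toFun n := (f (1, n)).2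
  invFun n := (f.symm (1, n)).2
  left_inv n := by
    have h1 : ((1 : M), (f (1, n)).2) = f (1, n) :=
      Prod.ext (fst_eq_one hN f n).symm rfl
    show (f.symm ((1 : M), (f (1, n)).2)).2 = n
    rw [h1]; simp
  right_inv n := by
    have h1 : ((1 : M), (f.symm (1, n)).2) = f.symm (1, n) :=
      Prod.ext (fst_eq_one hN f.symm n).symm rfl
    show (f ((1 : M), (f.symm (1, n)).2)).2 = n
    rw [h1]; simp
  map_mul' a b := by
    show (f (1, a * b)).2 = (f (1, a)).2 * (f (1, b)).2
    have : ((1 : M), (a * b : N)) = ((1 : M), a) * (1, b) := by simp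
    rw [this, map_mul]
    rfl

lemma apply_eq (hM : ((⊤ : Subgroup M).prod (⊥ : Subgroup N)).Characteristic)
    (hN : ((⊥ : Subgroup M).prod (⊤ : Subgroup N)).Characteristic)
    (f : MulAut (M × N)) (m : M) (n : N) :
    f (m, n) = (restrictFst hM f m, restrictSnd hN f n) := by
  have : ((m : M), n) = (m, (1 : N)) * ((1 : M), n) := by simp
  rw [this, map_mul]
  have h1 : (f (m, 1)).2 = 1 := snd_eq_one hM f m
  have h2 : (f (1, n)).1 = 1 := fst_eq_one hN f n
  ext
  · show (f (m, 1)).1 * (f (1, n)).1 = (f (m, 1)).1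
    rw [h2, mul_one]
  · show (f (m, 1)).2 * (f (1, n)).2 = (f (1, n)).2
    rw [h1, one_mul]

lemma orbitRel_prod_eq (hM : ((⊤ : Subgroup M).prod (⊥ : Subgroup N)).Characteristic)
    (hN : ((⊥ : Subgroup M).prod (⊤ : Subgroup N)).Characteristic) :
    MulAction.orbitRel (MulAut (M × N)) (M × N) =
      (MulAction.orbitRel (MulAut M) M).prod (MulAction.orbitRel (MulAut N) N) := by
  ext ⟨a, b⟩ ⟨c, d⟩
  show ((a, b) ∈ MulAction.orbit (MulAut (M × N)) (c, d)) ↔ _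
  rw [Setoid.prod_apply]
  constructor
  · rintro ⟨f, hf⟩
    have hf' : f (c, d) = (a, b) := hf
    rw [apply_eq hM hN f c d] at hf'
    exact ⟨⟨restrictFst hM f, congrArg Prod.fst hf'⟩,
      ⟨restrictSnd hN f, congrArg Prod.snd hf'⟩⟩
  · rintro ⟨⟨g, hg⟩, ⟨h, hh⟩⟩
    have hg' : g c = a := hg
    have hh' : h d = b := hh
    exact ⟨(MulEquiv.prodCongr g h : MulAut (M × N)), by
      show (g c, h d) = (a, b)
      rw [hg', hh']⟩

end Aux

theorem stmt3 (M N : Type*) [Group M] [Group N]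
    (hM : ((⊤ : Subgroup M).prod (⊥ : Subgroup N)).Characteristic)
    (hN : ((⊥ : Subgroup M).prod (⊤ : Subgroup N)).Characteristic) :
    omegaOrbits (M × N) = omegaOrbits M * omegaOrbits N := by
  unfold omegaOrbits
  rw [orbitRel_prod_eq hM hN, ← Nat.card_congr (Setoid.prodQuotientEquiv _ _), Nat.card_prod]
end

section
/- Let G be an infinite FC-group with ω(G) = 2. Then G is abelian and is either a torsion-free divisible abelian group (the additive group of a rational vector space) or an infinite elementary abelian p-group for some prime p. -/
/-!
Since `Aut G` is transitive on `G \ {1}`, either no nontrivial element has finite order or all of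
them have the same prime order `p`.

In the first case, `G` is abelian because commutators of an FC-group have finite order: the centre
of the finitely generated FC-group `⟨a, b⟩` has finite index `n`, and the transfer `g ↦ g ^ n` into
the centre kills commutators. It is divisible because `g ^ n` is again nontrivial, so some
automorphism maps it to `g`.

In the second case, `G` is a `p`-group. For `g ≠ 1` the normal closure of `g` is finite, since its
centre has finite index and is a finitely generated torsion abelian group. Counting the fixed
points of conjugation on this finite `p`-group gives a nontrivial central element. The centre is
characteristic, so transitivity puts every element into it.
-/

section

open Subgroup
open scoped commutatorElement IsMulCommutative

variable {G : Type*} [Group G]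

theorem commutatorElement_pow_index_center_eq_one [(center G).FiniteIndex] (a b : G) :
    ⁅a, b⁆ ^ (center G).index = 1 := by
  have hcomm : ⁅MonoidHom.transferCenterPow G a, MonoidHom.transferCenterPow G b⁆ = 1 :=
    commutatorElement_eq_one_iff_mul_comm.mpr (mul_comm _ _)
  rw [← MonoidHom.transferCenterPow_apply, map_commutatorElement, hcomm, OneMemClass.coe_one]

theorem IsPGroup.exists_ne_one_mem_center_of_normal {p : ℕ} [Fact p.Prime] (hG : IsPGroup p G)
    (N : Subgroup G) [N.Normal] [Finite N] {g : G} (hgN : g ∈ N) (hg : g ≠ 1) :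
    ∃ z ∈ center G, z ≠ 1 := by
  have : Nontrivial N := ⟨⟨⟨g, hgN⟩, 1, fun h => hg (congrArg Subtype.val h)⟩⟩
  obtain ⟨n, hn, hcard⟩ := (hG.to_subgroup N).nontrivial_iff_card.mp this
  have hdvd : p ∣ Nat.card N := hcard ▸ dvd_pow_self p hn.ne'
  obtain ⟨z, hz, hz1⟩ :=
    (hG.of_equiv ConjAct.toConjAct).exists_fixed_point_of_prime_dvd_card_of_fixed_point N hdvd
      (a := 1) fun _ => smul_one _
  refine ⟨z, mem_center_iff.mpr fun x => ?_, fun h => hz1 (Subtype.ext h.symm)⟩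
  have := congrArg Subtype.val (hz (ConjAct.toConjAct x))
  rw [ConjAct.Subgroup.val_conj_smul, ConjAct.smul_def, ConjAct.ofConjAct_toConjAct] at this
  exact mul_inv_eq_iff_eq_mul.mp this

namespace IsFCGroup

theorem finiteIndex_centralizer_singleton (hFC : IsFCGroup G) (g : G) :
    (centralizer {g}).FiniteIndex := by
  have hfin : (MulAction.orbit (ConjAct G) g).Finite :=
    (hFC g).subset fun h hh => isConj_comm.mp (ConjAct.mem_orbit_conjAct.mp hh)
  have e := index_comap_of_surjective (H := MulAction.stabilizer (ConjAct G) g)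
    (f := (ConjAct.toConjAct : G ≃* ConjAct G).toMonoidHom) ConjAct.toConjAct.surjective
  refine ⟨fun h => Set.ncard_ne_zero_of_mem (MulAction.mem_orbit_self g) hfin ?_⟩
  rw [← MulAction.index_stabilizer, ← e]
  rwa [centralizer_eq_comap_stabilizer] at h

theorem finiteIndex_centralizer (hFC : IsFCGroup G) {S : Set G} (hS : S.Finite) :
    (centralizer S).FiniteIndex := by
  have := hS.to_subtype
  rw [centralizer_eq_iInf, iInf_subtype']
  exact finiteIndex_iInf fun g => hFC.finiteIndex_centralizer_singleton g

theorem finiteIndex_center_closure (hFC : IsFCGroup G) {S : Set G} (hS : S.Finite) :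
    (center (closure S)).FiniteIndex := by
  have := hFC.finiteIndex_centralizer hS
  refine finiteIndex_of_le (H := (centralizer S).subgroupOf (closure S)) fun k hk => ?_
  rw [mem_subgroupOf, ← centralizer_closure, mem_centralizer_iff] at hk
  exact mem_center_iff.mpr fun h => Subtype.ext (hk h h.2)

theorem isOfFinOrder_commutatorElement (hFC : IsFCGroup G) (a b : G) : IsOfFinOrder ⁅a, b⁆ := by
  set H := closure ({a, b} : Set G)
  have := hFC.finiteIndex_center_closure (S := {a, b}) (Set.toFinite _)
  have ha : a ∈ H := subset_closure (by simp)
  have hb : b ∈ H := subset_closure (by simp)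
  refine isOfFinOrder_iff_pow_eq_one.mpr
    ⟨(center H).index, Nat.pos_of_ne_zero FiniteIndex.index_ne_zero, ?_⟩
  have := congrArg H.subtype (commutatorElement_pow_index_center_eq_one (⟨a, ha⟩ : H) ⟨b, hb⟩)
  rwa [map_pow, map_commutatorElement, map_one] at this

theorem mul_comm_of_pow_ne_one (hFC : IsFCGroup G)
    (htf : ∀ g : G, g ≠ 1 → ∀ n : ℕ, 0 < n → g ^ n ≠ 1) (a b : G) : a * b = b * a := by
  by_contra hab
  obtain ⟨n, hn, hpow⟩ := isOfFinOrder_iff_pow_eq_one.mp (hFC.isOfFinOrder_commutatorElement a b)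
  exact htf _ (mt commutatorElement_eq_one_iff_mul_comm.mp hab) n hn hpow

theorem finite_closure_of_isMulTorsion (hFC : IsFCGroup G) {S : Set G} (hS : S.Finite)
    (htors : IsMulTorsion (closure S)) : Finite (closure S) := by
  have := hFC.finiteIndex_center_closure hS
  have := hS.to_subtype
  have : Finite (center (closure S)) :=
    CommGroup.finite_of_fg_isMulTorsion _ (htors.subgroup _)
  exact (finite_iff_finite_and_finiteIndex (center (closure S))).mpr ⟨this, inferInstance⟩

theorem exists_ne_one_mem_center_of_isPGroup (hFC : IsFCGroup G) {p : ℕ} [Fact p.Prime]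
    (hG : IsPGroup p G) {g : G} (hg : g ≠ 1) : ∃ z ∈ center G, z ≠ 1 := by
  have hS : (Group.conjugatesOfSet ({g} : Set G)).Finite := by
    rw [Group.conjugatesOfSet, Set.biUnion_singleton]
    exact hFC g
  have : Finite (normalClosure ({g} : Set G)) :=
    hFC.finite_closure_of_isMulTorsion hS fun x => (hG.to_subgroup _).isOfFinOrder (NeZero.ne p) x
  exact hG.exists_ne_one_mem_center_of_normal _ (subset_normalClosure (Set.mem_singleton g)) hg

end IsFCGroup

theorem exists_mulAut_apply_eq_of_omegaOrbits_eq_two (h2 : omegaOrbits G = 2) {a b : G}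
    (ha : a ≠ 1) (hb : b ≠ 1) : ∃ φ : MulAut G, φ a = b := by
  let mk := Quotient.mk (MulAction.orbitRel (MulAut G) G)
  have hne : ∀ {c : G}, c ≠ 1 → mk c ≠ mk 1 := fun hc h => by
    obtain ⟨φ, hφ⟩ := Quotient.exact h
    exact hc (by simpa [MulAut.smul_def] using hφ.symm)
  obtain ⟨y, -, hy⟩ := (Nat.card_eq_two_iff' (mk 1)).mp h2
  exact Quotient.exact ((hy _ (hne hb)).trans (hy _ (hne ha)).symm)

section Transitive

variable (htrans : ∀ a b : G, a ≠ 1 → b ≠ 1 → ∃ φ : MulAut G, φ a = b)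
include htrans

theorem exists_prime_forall_pow_eq_one_of_isOfFinOrder {g : G} (hg : g ≠ 1)
    (hfin : IsOfFinOrder g) : ∃ p : ℕ, p.Prime ∧ ∀ x : G, x ^ p = 1 := by
  have hord : orderOf g ≠ 1 := by rwa [Ne, orderOf_eq_one_iff]
  set p := (orderOf g).minFac
  have hp : p.Prime := Nat.minFac_prime hord
  set h := g ^ (orderOf g / p)
  have hh : orderOf h = p := orderOf_pow_orderOf_div hfin.orderOf_pos.ne' (Nat.minFac_dvd _)
  have hh1 : h ≠ 1 := fun e => hp.ne_one (hh ▸ orderOf_eq_one_iff.mpr e)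
  refine ⟨p, hp, fun x => ?_⟩
  rcases eq_or_ne x 1 with rfl | hx
  · exact one_pow p
  · obtain ⟨φ, rfl⟩ := htrans h x hh1 hx
    rw [← map_pow, ← hh, pow_orderOf_eq_one, map_one]

theorem mul_comm_of_ne_one_mem_center {z : G} (hz : z ∈ Subgroup.center G) (hz1 : z ≠ 1)
    (a b : G) : a * b = b * a := by
  rcases eq_or_ne b 1 with rfl | hb
  · simp
  · obtain ⟨φ, rfl⟩ := htrans z b hz1 hb
    simpa using congrArg φ (Subgroup.mem_center_iff.mp hz (φ.symm a))

theorem exists_pow_eq_of_pow_ne_one (htf : ∀ g : G, g ≠ 1 → ∀ n : ℕ, 0 < n → g ^ n ≠ 1)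
    (g : G) {n : ℕ} (hn : 0 < n) : ∃ x : G, x ^ n = g := by
  rcases eq_or_ne g 1 with rfl | hg
  · exact ⟨1, one_pow n⟩
  · obtain ⟨φ, hφ⟩ := htrans (g ^ n) g (htf g hg n hn) hg
    exact ⟨φ g, by rw [← map_pow, hφ]⟩

end Transitive

end

theorem stmt7_general (G : Type*) [Group G] (hFC : IsFCGroup G)
    (h2 : omegaOrbits G = 2) :
    (∀ a b : G, a * b = b * a) ∧
      (((∀ g : G, g ≠ 1 → ∀ n : ℕ, 0 < n → g ^ n ≠ 1) ∧
          (∀ g : G, ∀ n : ℕ, 0 < n → ∃ x : G, x ^ n = g)) ∨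
        (∃ p : ℕ, p.Prime ∧ ∀ g : G, g ^ p = 1)) := by
  have htrans : ∀ a b : G, a ≠ 1 → b ≠ 1 → ∃ φ : MulAut G, φ a = b :=
    fun _ _ => exists_mulAut_apply_eq_of_omegaOrbits_eq_two h2
  by_cases htf : ∀ g : G, g ≠ 1 → ∀ n : ℕ, 0 < n → g ^ n ≠ 1
  · exact ⟨hFC.mul_comm_of_pow_ne_one htf,
      Or.inl ⟨htf, fun g _ => exists_pow_eq_of_pow_ne_one htrans htf g⟩⟩
  · push Not at htf
    obtain ⟨g, hg, n, hn, hgn⟩ := htf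
    obtain ⟨p, hp, hexp⟩ := exists_prime_forall_pow_eq_one_of_isOfFinOrder htrans hg
      (isOfFinOrder_iff_pow_eq_one.mpr ⟨n, hn, hgn⟩)
    have : Fact p.Prime := ⟨hp⟩
    have hG : IsPGroup p G := fun x => ⟨1, by rw [pow_one, hexp]⟩
    obtain ⟨z, hz, hz1⟩ := hFC.exists_ne_one_mem_center_of_isPGroup hG hg
    exact ⟨mul_comm_of_ne_one_mem_center htrans hz hz1, Or.inr ⟨p, hp, hexp⟩⟩

theorem stmt7 (G : Type*) [Group G] [Infinite G] (hFC : IsFCGroup G)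
    (h2 : omegaOrbits G = 2) :
    (∀ a b : G, a * b = b * a) ∧
      (((∀ g : G, g ≠ 1 → ∀ n : ℕ, 0 < n → g ^ n ≠ 1) ∧
          (∀ g : G, ∀ n : ℕ, 0 < n → ∃ x : G, x ^ n = g)) ∨
        (∃ p : ℕ, p.Prime ∧ ∀ g : G, g ^ p = 1)) :=
  stmt7_general G hFC h2
end

section
/- Let G be an infinite FC-group with finitely many automorphism orbits which is a non-abelian p-group. Then there exist h ∈ G' and g ∈ G \ G' with |h| = |g|, i.e., the spectrum of orders of elements of the derived subgroup meets the spectrum of orders of elements outside the derived subgroup. -/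
/-!
Automorphisms preserve the sizes of conjugacy classes and the orders of elements, so finitely many
automorphism orbits make `G` a group with boundedly finite conjugacy classes and exponent dividing
`p ^ n`. By B. H. Neumann's theorem `G'` is then finite; as a nontrivial finite `p`-group it
contains an element of order `p`. On the other hand, the infinite FC-group `G` has an infinite
abelian subgroup, which, having exponent dividing `p ^ n`, contains infinitely many solutions of
`g ^ p = 1`. All but finitely many of them lie outside `G'`, and those have order `p`.
-/

section

open Subgroup
open scoped commutatorElement

variable {G : Type*} [Group G]

theorem finiteIndex_centralizer_singleton_of_finite {x : G} (hx : {y | IsConj x y}.Finite) :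
    (centralizer {x}).FiniteIndex := by
  have horb : (MulAction.orbit (ConjAct G) x).Finite :=
    hx.subset fun y hy => (ConjAct.mem_orbit_conjAct.mp hy).symm
  rw [centralizer_eq_comap_stabilizer]
  refine ⟨(index_comap_of_surjective _ ConjAct.toConjAct.surjective).trans_ne ?_⟩
  rw [MulAction.index_stabilizer]
  exact ((Set.ncard_pos horb).mpr ⟨x, MulAction.mem_orbit_self x⟩).ne'

theorem finiteIndex_centralizer_of_finite {T : Set G} (hT : T.Finite)
    (hfc : ∀ t ∈ T, {y | IsConj t y}.Finite) : (centralizer T).FiniteIndex := by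
  rw [centralizer_eq_iInf, ← hT.coe_toFinset]
  simp_rw [Finset.mem_coe]
  exact finiteIndex_iInf' _ fun t ht =>
    finiteIndex_centralizer_singleton_of_finite (hfc t (hT.mem_toFinset.mp ht))

theorem commutatorElement_mul_of_mem_center {a b z w : G} (hz : z ∈ center G)
    (hw : w ∈ center G) :
    ⁅a * z, b * w⁆ = ⁅a, b⁆ := by
  rw [mem_center_iff] at hz hw
  simp only [commutatorElement_def, mul_inv_rev]
  calc a * z * (b * w) * (z⁻¹ * a⁻¹) * (w⁻¹ * b⁻¹)
      = a * (z * (b * w)) * z⁻¹ * a⁻¹ * (w⁻¹ * b⁻¹) := by group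
    _ = a * (b * w * z) * z⁻¹ * a⁻¹ * (w⁻¹ * b⁻¹) := by rw [hz (b * w)]
    _ = a * b * (w * a⁻¹) * w⁻¹ * b⁻¹ := by group
    _ = a * b * (a⁻¹ * w) * w⁻¹ * b⁻¹ := by rw [hw a⁻¹]
    _ = a * b * a⁻¹ * b⁻¹ := by group

theorem finite_commutatorSet_of_finiteIndex_center [(center G).FiniteIndex] :
    (commutatorSet G).Finite := by
  have : Finite (G ⧸ center G) := finite_quotient_of_finiteIndex
  refine (Set.finite_range fun q : (G ⧸ center G) × (G ⧸ center G) =>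
    ⁅q.1.out, q.2.out⁆).subset ?_
  rintro _ ⟨a, b, rfl⟩
  refine ⟨((a : G ⧸ center G), (b : G ⧸ center G)), ?_⟩
  have hmem (c : G) : (c : G ⧸ center G).out⁻¹ * c ∈ center G :=
    QuotientGroup.eq.mp (QuotientGroup.out_eq' _)
  dsimp only
  rw [← commutatorElement_mul_of_mem_center (hmem a) (hmem b), mul_inv_cancel_left,
    mul_inv_cancel_left]

theorem finite_commutator_of_finiteIndex_center [(center G).FiniteIndex] :
    Finite (commutator G) :=
  have := (finite_commutatorSet_of_finiteIndex_center (G := G)).to_subtype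
  inferInstance

/-- Dietzmann's lemma. The centralizer of `S` is central in `closure S` and has finite index, so
Schur's theorem makes the derived subgroup finite, and the abelianization is finitely generated by
torsion elements. -/
theorem finite_closure_of_conj_mem {S : Set G} (hS : S.Finite)
    (hconj : ∀ s ∈ S, ∀ g : G, g * s * g⁻¹ ∈ S) (htor : ∀ s ∈ S, IsOfFinOrder s) :
    Finite (closure S) := by
  set H := closure S
  set S' : Set H := Subtype.val ⁻¹' S
  have hS' : S'.Finite := hS.preimage Subtype.val_injective.injOn
  have hgen : closure S' = ⊤ := closure_closure_coe_preimage
  have : (center H).FiniteIndex := by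
    rw [center_eq_iInf hgen, ← centralizer_eq_iInf]
    refine finiteIndex_centralizer_of_finite hS' fun s hs => hS'.subset fun y hy => ?_
    obtain ⟨c, rfl⟩ := isConj_iff.mp hy
    exact hconj _ hs _
  have : Group.FG H := by
    have := hS.to_subtype
    exact Group.closure_finite_fg S
  have htorAb : IsMulTorsion (Abelianization H) := by
    have hgenAb : closure (Abelianization.of '' S') = ⊤ := by
      rw [← MonoidHom.map_closure, hgen,
        map_top_of_surjective _ (QuotientGroup.mk_surjective (s := commutator H))]
    have hle : closure (Abelianization.of '' S') ≤ CommGroup.torsion (Abelianization H) := by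
      rw [closure_le]
      rintro _ ⟨s, hs, rfl⟩
      exact Abelianization.of.isOfFinOrder (Submonoid.isOfFinOrder_coe.mp (htor _ hs))
    exact fun x => hle (hgenAb ▸ mem_top x)
  have : Group.FG (Abelianization H) := QuotientGroup.fg (commutator H)
  have : Finite (H ⧸ commutator H) :=
    CommGroup.finite_of_fg_isMulTorsion (Abelianization H) htorAb
  have : Finite (commutator H) := finite_commutator_of_finiteIndex_center
  exact Finite.of_subgroup_quotient (commutator H)

theorem finite_comap_mk' {N : Subgroup G} [N.Normal] [Finite N] (K : Subgroup (G ⧸ N))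
    [Finite K] : Finite (K.comap (QuotientGroup.mk' N)) := by
  refine Set.Finite.to_subtype (s := QuotientGroup.mk' N ⁻¹' K)
    ((Set.toFinite (K : Set (G ⧸ N))).preimage' fun q _ => ?_)
  obtain ⟨g, rfl⟩ := QuotientGroup.mk'_surjective N q
  exact ((Set.toFinite (N : Set G)).image (g * ·)).subset fun y hy =>
    ⟨g⁻¹ * y, QuotientGroup.eq.mp hy.symm, mul_inv_cancel_left g y⟩

/-- The distinct conjugates `c * d = t (x * d) t⁻¹` of `x * d` already fill its class, so
`g (x d) g⁻¹ = c * d` for some `c`, i.e. `⁅g, d⁆ = (g x g⁻¹)⁻¹ c`. -/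
theorem commutatorElement_mem_image2_of_ncard_conj_le {x d : G}
    (hfin : {y | IsConj (x * d) y}.Finite)
    (hle : {y | IsConj (x * d) y}.ncard ≤ {y | IsConj x y}.ncard)
    (hd : ∀ c, IsConj x c → ∃ t, t * x * t⁻¹ = c ∧ Commute t d) (g : G) :
    ⁅g, d⁆ ∈ Set.image2 (fun a b => a⁻¹ * b) {y | IsConj x y} {y | IsConj x y} := by
  set C := {y | IsConj x y}
  have hsub : (· * d) '' C ⊆ {y | IsConj (x * d) y} := by
    rintro _ ⟨c, hc, rfl⟩
    obtain ⟨t, rfl, htd⟩ := hd c hc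
    refine isConj_iff.mpr ⟨t, ?_⟩
    calc t * (x * d) * t⁻¹ = t * x * (d * t⁻¹) := by group
      _ = t * x * t⁻¹ * d := by rw [htd.symm.inv_right.eq]; group
  have heq : (· * d) '' C = {y | IsConj (x * d) y} :=
    Set.eq_of_subset_of_ncard_le hsub
      (by rwa [Set.ncard_image_of_injective _ (mul_left_injective d)]) hfin
  obtain ⟨c, hc, hcd⟩ : g * (x * d) * g⁻¹ ∈ (· * d) '' C := heq ▸ isConj_iff.mpr ⟨g, rfl⟩
  refine ⟨g * x * g⁻¹, isConj_iff.mpr ⟨g, rfl⟩, c, hc, ?_⟩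
  rw [eq_mul_inv_of_mul_eq hcd, commutatorElement_def]
  group

/-- B. H. Neumann's theorem, for torsion groups. Take `x` with a largest class `C`; the `d`
centralizing chosen conjugators form a finite-index subgroup `D` with `⁅G, D⁆ ⊆ C⁻¹ C`, so `D`
becomes central modulo the normal closure `N` of `C⁻¹ C`, which is finite by Dietzmann's lemma. -/
theorem finite_commutator_of_bddAbove_ncard_conj (hFC : IsFCGroup G)
    (hbdd : BddAbove (Set.range fun x : G => {y | IsConj x y}.ncard)) (htor : IsMulTorsion G) :
    Finite (commutator G) := by
  obtain ⟨x, hx⟩ : ∃ x : G, ∀ y : G, {z | IsConj y z}.ncard ≤ {z | IsConj x z}.ncard := by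
    obtain ⟨x, hx⟩ := Nat.sSup_mem (Set.range_nonempty _) hbdd
    exact ⟨x, fun y => (le_csSup hbdd ⟨y, rfl⟩).trans_eq hx.symm⟩
  set C := {y | IsConj x y}
  have := (hFC x).to_subtype
  choose t ht using fun c : C => isConj_iff.mp c.2
  set D := centralizer (Set.range t)
  have hD : D.FiniteIndex :=
    finiteIndex_centralizer_of_finite (Set.finite_range t) fun s _ => hFC s
  set S := Set.image2 (fun a b => a⁻¹ * b) C C
  have hSconj : ∀ s ∈ S, ∀ g : G, g * s * g⁻¹ ∈ S := by
    rintro _ ⟨a, ha, b, hb, rfl⟩ g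
    refine ⟨g * a * g⁻¹, ha.trans (isConj_iff.mpr ⟨g, rfl⟩),
      g * b * g⁻¹, hb.trans (isConj_iff.mpr ⟨g, rfl⟩), by group⟩
  set N := normalClosure S
  have : Finite N := by
    have hle : N ≤ closure S := closure_mono fun y hy => by
      obtain ⟨a, ha, hay⟩ := Group.mem_conjugatesOfSet_iff.mp hy
      obtain ⟨g, rfl⟩ := isConj_iff.mp hay
      exact hSconj a ha g
    have := finite_closure_of_conj_mem ((hFC x).image2 _ (hFC x)) hSconj fun s _ => htor s
    exact Finite.of_injective _ (inclusion_injective hle)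
  set π := QuotientGroup.mk' N
  have hcent : D.map π ≤ center (G ⧸ N) := by
    rintro _ ⟨d, hd, rfl⟩
    rw [mem_center_iff]
    intro q
    obtain ⟨g, rfl⟩ := QuotientGroup.mk'_surjective N q
    rw [← commutatorElement_eq_one_iff_mul_comm, ← map_commutatorElement,
      QuotientGroup.mk'_apply, QuotientGroup.eq_one_iff]
    exact subset_normalClosure (commutatorElement_mem_image2_of_ncard_conj_le (hFC _) (hx _)
      (fun c hc => ⟨t ⟨c, hc⟩, ht _, mem_centralizer_iff.mp hd _ ⟨_, rfl⟩⟩) g)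
  have : (center (G ⧸ N)).FiniteIndex :=
    have : (D.map π).FiniteIndex :=
      ⟨ne_zero_of_dvd_ne_zero hD.index_ne_zero
        (index_map_dvd _ (QuotientGroup.mk'_surjective N))⟩
    finiteIndex_of_le hcent
  have : Finite (commutator (G ⧸ N)) := finite_commutator_of_finiteIndex_center
  have hle : commutator G ≤ (commutator (G ⧸ N)).comap π := by
    rw [← map_le_iff_le_comap, _root_.commutator, map_commutator]
    exact commutator_mono le_top le_top
  have := finite_comap_mk' (commutator (G ⧸ N))
  exact Finite.of_injective _ (inclusion_injective hle)

/-- A maximal set `M` of pairwise commuting elements contains its centralizer, which has finite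
index when `M` is finite. -/
theorem IsFCGroup.exists_isMulCommutative_infinite [Infinite G] (hFC : IsFCGroup G) :
    ∃ A : Subgroup G, IsMulCommutative A ∧ Infinite A := by
  obtain ⟨M, hM⟩ := zorn_subset {M : Set G | M.Pairwise Commute} fun c hc hchain =>
    ⟨⋃₀ c, hchain.pairwise_sUnion.mpr hc, fun s hs => Set.subset_sUnion_of_mem hs⟩
  have hcent : (centralizer M : Set G) ⊆ M := fun z hz =>
    hM.mem_of_prop_insert (hM.prop.insert fun b hb _ =>
      have hzb : Commute z b := (mem_centralizer_iff.mp hz b hb).symm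
      ⟨hzb, hzb.symm⟩)
  refine ⟨centralizer M, .of_comm fun a b => Subtype.ext ?_, ?_⟩
  · exact (mem_centralizer_iff.mp a.2 b (hcent b.2)).symm
  · by_contra hfinite
    rw [not_infinite_iff_finite] at hfinite
    have hMfin : M.Finite := by
      refine (Set.toFinite (centralizer M : Set G)).subset fun z hz => ?_
      refine mem_centralizer_iff.mpr fun b hb => ?_
      obtain rfl | hne := eq_or_ne b z
      · rfl
      · exact hM.prop hb hz hne
    have := finiteIndex_centralizer_of_finite hMfin fun t _ => hFC t
    have := (finite_iff_finite_and_finiteIndex (centralizer M)).mpr ⟨hfinite, this⟩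
    exact not_finite G

/-- If the kernel of `a ↦ a ^ p` were finite, its image would be infinite of exponent `p ^ E`. -/
theorem CommGroup.infinite_setOf_pow_eq_one {A : Type*} [CommGroup A] [Infinite A] {p E : ℕ}
    (hexp : ∀ a : A, a ^ p ^ E = 1) : {a : A | a ^ p = 1}.Infinite := by
  induction E generalizing A with
  | zero =>
    simp only [pow_zero, pow_one] at hexp
    exact absurd (subsingleton_of_forall_eq 1 hexp) (not_subsingleton A)
  | succ E ih =>
    intro hfin
    set ψ : A →* A := powMonoidHom p
    have : Infinite ψ.range := by
      by_contra h
      rw [not_infinite_iff_finite] at h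
      have : Finite ψ.ker := hfin.to_subtype
      have := ψ.finite_iff_finite_ker_range.mpr ⟨this, h⟩
      exact not_finite A
    refine ih (A := ψ.range) ?_ ?_
    · rintro ⟨_, a, rfl⟩
      apply Subtype.ext
      show (a ^ p) ^ p ^ E = 1
      rw [← pow_mul, ← pow_succ', hexp]
    · refine (hfin.preimage Subtype.val_injective.injOn).subset fun r hr => ?_
      simpa using congrArg Subtype.val hr

open scoped IsMulCommutative in
theorem IsFCGroup.infinite_setOf_pow_eq_one [Infinite G] (hFC : IsFCGroup G) {p E : ℕ}
    (hexp : ∀ g : G, g ^ p ^ E = 1) : {g : G | g ^ p = 1}.Infinite := by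
  obtain ⟨A, hA, hAinf⟩ := hFC.exists_isMulCommutative_infinite
  have hAexp : ∀ a : A, a ^ p ^ E = 1 := fun a => Subtype.ext (by simp [hexp])
  refine ((CommGroup.infinite_setOf_pow_eq_one hAexp).image
    Subtype.val_injective.injOn).mono ?_
  rintro _ ⟨a, ha, rfl⟩
  simpa using congrArg Subtype.val ha

theorem IsPGroup.pow_prime_pow_eq_one_of_orderOf_le {p n : ℕ} [hp : Fact p.Prime]
    (hpG : IsPGroup p G) (hn : ∀ g : G, orderOf g ≤ n) (g : G) : g ^ p ^ n = 1 := by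
  obtain ⟨k, hk⟩ := hpG.exists_orderOf_eq_pow g
  rw [← orderOf_dvd_iff_pow_eq_one, hk]
  exact pow_dvd_pow p ((Nat.lt_pow_self hp.out.one_lt).trans_le (hk ▸ hn g)).le

theorem IsPGroup.exists_mem_orderOf_eq_of_ne_bot {p : ℕ} [Fact p.Prime] (hpG : IsPGroup p G)
    {H : Subgroup G} [Finite H] (hne : H ≠ ⊥) : ∃ h ∈ H, orderOf h = p := by
  have : Nontrivial H := (nontrivial_iff_ne_bot _).mpr hne
  obtain ⟨k, hk, hcard⟩ := (hpG.to_subgroup H).nontrivial_iff_card.mp this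
  obtain ⟨h, hh⟩ := exists_prime_orderOf_dvd_card' p (hcard ▸ dvd_pow_self p hk.ne')
  exact ⟨h, h.2, (orderOf_coe h).trans hh⟩

theorem commutator_ne_bot_of_not_forall_commute (hna : ¬ ∀ a b : G, a * b = b * a) :
    commutator G ≠ ⊥ := fun h => hna fun a b =>
  commutatorElement_eq_one_iff_mul_comm.mp <| mem_bot.mp <|
    h ▸ commutator_mem_commutator (mem_top a) (mem_top b)

theorem finite_range_of_mulAut_invariant (hfin : HasFinitelyManyAutOrbits G) {α : Type*}
    (f : G → α) (hf : ∀ (φ : MulAut G) (x : G), f (φ x) = f x) : (Set.range f).Finite := by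
  unfold HasFinitelyManyAutOrbits at hfin
  refine (Set.finite_range (Quotient.lift (s := MulAction.orbitRel (MulAut G) G) f ?_)).subset ?_
  · rintro a b ⟨φ, rfl⟩
    exact hf φ b
  · rintro _ ⟨x, rfl⟩
    exact ⟨Quotient.mk _ x, rfl⟩

theorem setOf_isConj_apply_eq_image (φ : MulAut G) (x : G) :
    {y | IsConj (φ x) y} = φ '' {y | IsConj x y} := by
  ext y
  constructor
  · intro h
    exact ⟨φ.symm y, by simpa using φ.symm.toMonoidHom.map_isConj h, by simp⟩
  · rintro ⟨z, hz, rfl⟩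
    exact φ.toMonoidHom.map_isConj hz

theorem bddAbove_range_ncard_isConj (hfin : HasFinitelyManyAutOrbits G) :
    BddAbove (Set.range fun x : G => {y | IsConj x y}.ncard) :=
  (finite_range_of_mulAut_invariant hfin _ fun φ x => by
    rw [setOf_isConj_apply_eq_image, Set.ncard_image_of_injective _ φ.injective]).bddAbove

end

theorem stmt11 (G : Type*) [Group G] [Infinite G] (hFC : IsFCGroup G)
    (hfin : HasFinitelyManyAutOrbits G) (p : ℕ) (hp : p.Prime) (hpG : IsPGroup p G)
    (hna : ¬ ∀ a b : G, a * b = b * a) :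
    ∃ h g : G, h ∈ commutator G ∧ g ∉ commutator G ∧ orderOf h = orderOf g := by
  have : Fact p.Prime := ⟨hp⟩
  obtain ⟨n, hn⟩ := (finite_range_of_mulAut_invariant hfin orderOf fun φ x =>
    φ.orderOf_eq x).bddAbove
  have hexp := hpG.pow_prime_pow_eq_one_of_orderOf_le fun g => hn ⟨g, rfl⟩
  have htor : IsMulTorsion G := fun g =>
    isOfFinOrder_iff_pow_eq_one.mpr ⟨p ^ n, pow_pos hp.pos n, hexp g⟩
  have : Finite (commutator G) :=
    finite_commutator_of_bddAbove_ncard_conj hFC (bddAbove_range_ncard_isConj hfin) htor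
  obtain ⟨h, hh, hordh⟩ :=
    hpG.exists_mem_orderOf_eq_of_ne_bot (commutator_ne_bot_of_not_forall_commute hna)
  obtain ⟨g, hg, hgG'⟩ :=
    ((hFC.infinite_setOf_pow_eq_one hexp).sdiff (Set.toFinite (commutator G : Set G))).nonempty
  have hordg : orderOf g = p := orderOf_eq_prime hg fun h1 => hgG' (h1 ▸ one_mem _)
  exact ⟨h, g, hh, hgG', hordh.trans hordg.symm⟩
end
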